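/- For integers k ≥ 1 and 1 ≤ m ≤ k−1, with y_m = 1 / (1 + (1 − 2/(2k+1))^{2m−2}), the following identity holds: (1/2 + 1/(4k))² · y_m · (1 − y_{m+1}) = (1/2 − 1/(4k))² · (1 − y_m) · y_{m+1}. Consequently, with μ_m = 1/2 − 1/(4k) + y_m/(2k), one has ((1/2 + 1/(4k))·y_m)/μ_m = ((1/2 − 1/(4k))·y_{m+1})/(1 − μ_{m+1}). -/

import Mathlib

/-!
Write `a = 1/2 + 1/(4k)`, `b = 1/2 - 1/(4k)` and `r = 1 - 2/(2k+1)`, so that `a r = b`.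
With `x = r^(2m-2)` we have `y_m = 1/(1+x)` and `y_{m+1} = 1/(1+x r²)`, hence
`y_m (1 - y_{m+1}) = x r² / ((1+x)(1+x r²))` and `(1 - y_m) y_{m+1} = x / ((1+x)(1+x r²))`,
which gives the first identity. Since `a - b = 1/(2k)` and `1 - b = a`, the priors are the
mixtures `μ_m = a y_m + b (1 - y_m)` and `1 - μ_{m+1} = a (1 - y_{m+1}) + b y_{m+1}`; after
cross-multiplying, the second identity is the first one plus `a b y_m y_{m+1}` on both sides.
-/

noncomputable section

/-- `y_m = 1 / (1 + (1 - 2/(2k+1))^(2m-2))`. -/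
def yk (k m : ℕ) : ℝ := 1 / (1 + (1 - 2/(2*(k:ℝ) + 1)) ^ (2*m - 2))

/-- `μ_m = 1/2 - 1/(4k) + y_m/(2k)`. -/
def muk (k m : ℕ) : ℝ := 1/2 - 1/(4*(k:ℝ)) + yk k m / (2*(k:ℝ))

theorem sq_mul_one_div_mul_eq_of_mul_eq {F : Type*} [Field F] {a b r x : F} (hab : a * r = b)
    (hx : 1 + x ≠ 0) (hxr : 1 + x * r ^ 2 ≠ 0) :
    a ^ 2 * (1 / (1 + x)) * (1 - 1 / (1 + x * r ^ 2))
      = b ^ 2 * (1 - 1 / (1 + x)) * (1 / (1 + x * r ^ 2)) := by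
  subst hab
  field_simp
  ring

theorem mul_div_mix_eq_of_sq_mul_eq {F : Type*} [Field F] {a b y y' : F}
    (hy : a * y + b * (1 - y) ≠ 0) (hy' : a * (1 - y') + b * y' ≠ 0)
    (h : a ^ 2 * y * (1 - y') = b ^ 2 * (1 - y) * y') :
    a * y / (a * y + b * (1 - y)) = b * y' / (a * (1 - y') + b * y') := by
  rw [div_eq_div_iff hy hy']
  linear_combination h

theorem mul_add_mul_one_sub_pos {a b y : ℝ} (ha : 0 < a) (hb : 0 < b) (hy₀ : 0 ≤ y) (hy₁ : y ≤ 1) :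
    0 < a * y + b * (1 - y) := by
  rcases le_total a b with hle | hle
  · nlinarith [mul_le_mul_of_nonneg_right hle (sub_nonneg.2 hy₁)]
  · nlinarith [mul_le_mul_of_nonneg_right hle hy₀]

theorem mul_one_sub_two_div (k : ℕ) (hk : 1 ≤ k) :
    (1/2 + 1/(4*(k:ℝ))) * (1 - 2/(2*(k:ℝ) + 1)) = 1/2 - 1/(4*(k:ℝ)) := by
  have hK : (0:ℝ) < k := by exact_mod_cast hk
  field_simp
  ring

theorem yk_succ (k : ℕ) {m : ℕ} (hm : 1 ≤ m) :
    yk k (m + 1) = 1 / (1 + (1 - 2/(2*(k:ℝ) + 1)) ^ (2*m - 2) * (1 - 2/(2*(k:ℝ) + 1)) ^ 2) := by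
  rw [yk, ← pow_add]
  congr 3
  omega

theorem one_sub_two_div_pow_nonneg (k m : ℕ) : 0 ≤ (1 - 2/(2*(k:ℝ) + 1)) ^ (2*m - 2) :=
  Even.pow_nonneg ⟨m - 1, by omega⟩ _

theorem yk_nonneg (k m : ℕ) : 0 ≤ yk k m := by
  have := one_sub_two_div_pow_nonneg k m
  rw [yk]
  positivity

theorem yk_le_one (k m : ℕ) : yk k m ≤ 1 := by
  have := one_sub_two_div_pow_nonneg k m
  exact div_le_one_of_le₀ (by linarith) (by positivity)

theorem muk_eq (k m : ℕ) :
    muk k m = (1/2 + 1/(4*(k:ℝ))) * yk k m + (1/2 - 1/(4*(k:ℝ))) * (1 - yk k m) := by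
  rw [muk]
  ring

theorem one_sub_muk_eq (k m : ℕ) :
    1 - muk k m = (1/2 + 1/(4*(k:ℝ))) * (1 - yk k m) + (1/2 - 1/(4*(k:ℝ))) * yk k m := by
  rw [muk]
  ring

theorem stmt_14_general (k m : ℕ) (hk : 1 ≤ k) (hm : 1 ≤ m) :
    (1/2 + 1/(4*(k:ℝ)))^2 * yk k m * (1 - yk k (m+1))
      = (1/2 - 1/(4*(k:ℝ)))^2 * (1 - yk k m) * yk k (m+1) ∧
    ((1/2 + 1/(4*(k:ℝ))) * yk k m) / muk k m
      = ((1/2 - 1/(4*(k:ℝ))) * yk k (m+1)) / (1 - muk k (m+1)) := by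
  have hK : (1:ℝ) ≤ k := by exact_mod_cast hk
  have ha : 0 < 1/2 + 1/(4*(k:ℝ)) := by positivity
  have hb : 0 < 1/2 - 1/(4*(k:ℝ)) := by
    have : 1/(4*(k:ℝ)) ≤ 1/4 := by gcongr; linarith
    linarith
  have hodds : (1/2 + 1/(4*(k:ℝ)))^2 * yk k m * (1 - yk k (m+1))
      = (1/2 - 1/(4*(k:ℝ)))^2 * (1 - yk k m) * yk k (m+1) := by
    have hx := one_sub_two_div_pow_nonneg k m
    rw [yk_succ k hm, yk]
    refine sq_mul_one_div_mul_eq_of_mul_eq (mul_one_sub_two_div k hk) ?_ ?_ <;> positivity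
  refine ⟨hodds, ?_⟩
  rw [muk_eq, one_sub_muk_eq]
  refine mul_div_mix_eq_of_sq_mul_eq ?_ ?_ hodds
  · exact (mul_add_mul_one_sub_pos ha hb (yk_nonneg k m) (yk_le_one k m)).ne'
  · rw [add_comm]
    exact (mul_add_mul_one_sub_pos hb ha (yk_nonneg k (m+1)) (yk_le_one k (m+1))).ne'

theorem stmt_14 (k m : ℕ) (hk : 1 ≤ k) (hm : 1 ≤ m) (hmk : m ≤ k - 1) :
    (1/2 + 1/(4*(k:ℝ)))^2 * yk k m * (1 - yk k (m+1))
      = (1/2 - 1/(4*(k:ℝ)))^2 * (1 - yk k m) * yk k (m+1) ∧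
    ((1/2 + 1/(4*(k:ℝ))) * yk k m) / muk k m
      = ((1/2 - 1/(4*(k:ℝ))) * yk k (m+1)) / (1 - muk k (m+1)) :=
  stmt_14_general k m hk hm
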